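/- Let F : ℝ → ℝ satisfy F(y) = -2y² for |y| < 1, and let f(t) = 1/(1+|t|). Then there is no continuously differentiable function y : [0,∞) → ℝ satisfying ẏ(t) = -½F(y(t)) + f(t) = y(t)² + f(t) for t > 0 (whenever |y(t)| < 1) together with y(t) → 0 as t → +∞. -/

import Mathlib

/-! Once |y| < 1 the equation reads ẏ = y² + 1/(1+t) ≥ 1/(1+t), so y - log(1+t) is eventually
nondecreasing and y grows at least like log(1+t), which is incompatible with y → 0. -/

open Filter

theorem tendsto_atTop_of_hasDerivAt_le {f g f' g' : ℝ → ℝ}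
    (hf : ∀ᶠ t in atTop, HasDerivAt f (f' t) t) (hg : ∀ᶠ t in atTop, HasDerivAt g (g' t) t)
    (hle : ∀ᶠ t in atTop, f' t ≤ g' t) (hf_top : Tendsto f atTop atTop) :
    Tendsto g atTop atTop := by
  obtain ⟨T, hT⟩ := eventually_atTop.mp (hf.and (hg.and hle))
  have hdiff : ∀ t ∈ Set.Ici T, HasDerivAt (g - f) (g' t - f' t) t :=
    fun t ht ↦ (hT t ht).2.1.sub (hT t ht).1
  have hmono : MonotoneOn (g - f) (Set.Ici T) := by
    refine monotoneOn_of_hasDerivWithinAt_nonneg (convex_Ici T)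
      (fun t ht ↦ (hdiff t ht).continuousAt.continuousWithinAt)
      (fun t ht ↦ (hdiff t (interior_subset ht)).hasDerivWithinAt) fun t ht ↦ ?_
    exact sub_nonneg.mpr (hT t (interior_subset ht)).2.2
  refine tendsto_atTop_mono' atTop ?_ (tendsto_atTop_add_const_right atTop (g T - f T) hf_top)
  filter_upwards [eventually_ge_atTop T] with t ht
  have := hmono Set.self_mem_Ici ht ht
  simp only [Pi.sub_apply] at this
  linarith

theorem hasDerivAt_log_one_add {t : ℝ} (ht : -1 < t) :
    HasDerivAt (fun s ↦ Real.log (1 + s)) (1 / (1 + t)) t := by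
  simpa [one_div] using ((hasDerivAt_id t).const_add 1).log (by simp only [id]; linarith)

theorem tendsto_log_one_add_atTop : Tendsto (fun t : ℝ ↦ Real.log (1 + t)) atTop atTop :=
  Real.tendsto_log_atTop.comp (tendsto_atTop_add_const_left atTop 1 tendsto_id)

theorem no_incoming_trajectory_quadratic_nonhyperbolic
    (F : ℝ → ℝ) (hF : ∀ v : ℝ, |v| < 1 → F v = -2 * v ^ 2)
    (y : ℝ → ℝ)
    (hy : ∀ t : ℝ, 0 < t →
      HasDerivAt y (-(1 / 2) * F (y t) + 1 / (1 + |t|)) t) :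
    ¬ Tendsto y atTop (nhds 0) := by
  intro hy_zero
  have hy_small : ∀ᶠ t in atTop, |y t| < 1 := by
    simpa using hy_zero.abs.eventually (eventually_lt_nhds (show |(0 : ℝ)| < 1 by norm_num))
  have hy_deriv : ∀ᶠ t in atTop, HasDerivAt y (y t ^ 2 + 1 / (1 + t)) t := by
    filter_upwards [hy_small, eventually_gt_atTop 0] with t hyt ht
    convert hy t ht using 1
    rw [hF _ hyt, abs_of_pos ht]
    ring
  have hlog_deriv : ∀ᶠ t in atTop, HasDerivAt (fun s ↦ Real.log (1 + s)) (1 / (1 + t)) t := by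
    filter_upwards [eventually_gt_atTop (-1)] with t ht using hasDerivAt_log_one_add ht
  have hy_top : Tendsto y atTop atTop :=
    tendsto_atTop_of_hasDerivAt_le hlog_deriv hy_deriv
      (Eventually.of_forall fun t ↦ le_add_of_nonneg_left (sq_nonneg (y t)))
      tendsto_log_one_add_atTop
  exact not_tendsto_nhds_of_tendsto_atTop hy_top 0 hy_zero
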